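/- Let X be a reduced finite type complex scheme that is covered by finitely many closed subschemes Xᵢ, each of which is the image of a surjective morphism from a finite product of reduced schemes each admitting a surjective morphism from a scheme with only constant invertible functions. Then every invertible regular function on X is locally constant. -/

import Mathlib

/-!
On each piece `Spec (R/Iᵢ)` every unit `u` is constant. Two `ℂ`-points of the piece lift to
primes of `⨂ⱼ Sᵢⱼ`; after passing to finitely generated subalgebras of the `Sᵢⱼ` these become
`ℂ`-points of a tensor product of algebras with only constant units, and there a unit takes the
same value at any two `ℂ`-points: change the point one factor at a time, and note that with the
other factors evaluated the unit becomes a unit of the remaining factor, hence a constant. By the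
Nullstellensatz a function on a reduced finite type `ℂ`-algebra is determined by its values at
`ℂ`-points. So `u ≡ cᵢ mod Iᵢ`, hence `∏ᵢ (u - cᵢ) = 0` as the `Iᵢ` meet in `0`, and the
Lagrange idempotents at the distinct `cᵢ` write `u` as a combination of idempotents.
-/

open scoped TensorProduct

def HasConstantUnits (k A : Type*) [CommRing k] [Ring A] [Algebra k A] : Prop :=
  ∀ u : Aˣ, ∃ c : k, (u : A) = algebraMap k A c

theorem HasConstantUnits.of_injective {k A B : Type*} [CommRing k] [Ring A] [Ring B]
    [Algebra k A] [Algebra k B] (f : A →ₐ[k] B) (hf : Function.Injective f)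
    (hB : HasConstantUnits k B) : HasConstantUnits k A := fun u ↦ by
  obtain ⟨c, hc⟩ := hB (Units.map f u)
  exact ⟨c, hf (by simpa using hc)⟩

theorem RingHom.injective_of_surjective_comap {R S : Type*} [CommRing R] [CommRing S]
    [IsReduced R] (f : R →+* S) (hf : Function.Surjective (PrimeSpectrum.comap f)) :
    Function.Injective f := by
  rw [injective_iff_ker_eq_bot, eq_bot_iff, ← Ideal.zero_eq_bot, ← nilradical_eq_zero R]
  exact (PrimeSpectrum.denseRange_comap_iff_ker_le_nilRadical f).mp hf.denseRange

section Nullstellensatz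

variable {k B : Type*} [Field k] [IsAlgClosed k] [CommRing B] [Algebra k B]
  [Algebra.FiniteType k B]

theorem exists_algHom_ker_eq_of_isMaximal (M : Ideal B) [M.IsMaximal] :
    ∃ ε : B →ₐ[k] k, RingHom.ker ε = M := by
  let := Ideal.Quotient.field M
  have : Algebra.FiniteType k (B ⧸ M) := .of_surjective _ (Ideal.Quotient.mkₐ_surjective k M)
  have := finite_of_finite_type_of_isJacobsonRing k (B ⧸ M)
  let e : k ≃ₐ[k] B ⧸ M := AlgEquiv.ofBijective (Algebra.ofId k _)
    IsAlgClosed.algebraMap_bijective_of_isIntegral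
  refine ⟨e.symm.toAlgHom.comp (Ideal.Quotient.mkₐ k M), ?_⟩
  ext b
  simp [RingHom.mem_ker, Ideal.Quotient.eq_zero_iff_mem]

theorem exists_algHom_apply_eq_of_sub_mem (q : Ideal B) [q.IsPrime] {x : B} {d : k}
    (h : x - algebraMap k B d ∈ q) : ∃ ε : B →ₐ[k] k, ε x = d := by
  obtain ⟨M, _, hqM⟩ := Ideal.exists_le_maximal q Ideal.IsPrime.ne_top'
  obtain ⟨ε, hε⟩ := exists_algHom_ker_eq_of_isMaximal (k := k) M
  refine ⟨ε, ?_⟩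
  have : x - algebraMap k B d ∈ RingHom.ker ε := hε ▸ hqM h
  simpa [sub_eq_zero] using this

theorem eq_zero_of_forall_algHom_apply_eq_zero [IsReduced B] {x : B}
    (h : ∀ ε : B →ₐ[k] k, ε x = 0) : x = 0 := by
  have := isJacobsonRing_of_finiteType (A := k) (B := B)
  have hx : x ∈ (⊥ : Ideal B).jacobson := Ideal.mem_sInf.mpr fun M ⟨_, hM⟩ ↦ by
    obtain ⟨ε, hε⟩ := exists_algHom_ker_eq_of_isMaximal (k := k) M
    exact hε ▸ h ε
  rw [← Ideal.radical_eq_jacobson] at hx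
  obtain ⟨n, hn⟩ := hx
  exact IsNilpotent.eq_zero ⟨n, hn⟩

end Nullstellensatz

namespace PiTensorProduct

section productMap

variable {k ι : Type*} [CommSemiring k] [Fintype ι] {A : ι → Type*} [∀ j, Semiring (A j)]
  [∀ j, Algebra k (A j)] {B : Type*} [CommSemiring B] [Algebra k B]

noncomputable def productMap (f : ∀ j, A j →ₐ[k] B) : (⨂[k] j, A j) →ₐ[k] B :=
  liftAlgHom ((MultilinearMap.mkPiAlgebra k ι B).compLinearMap fun j ↦ (f j).toLinearMap)
    (by simp) (fun x y ↦ by simp [Finset.prod_mul_distrib])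

@[simp]
theorem productMap_tprod (f : ∀ j, A j →ₐ[k] B) (a : ∀ j, A j) :
    productMap f (tprod k a) = ∏ j, f j (a j) := by
  change lift _ (tprod k a) = _
  simp

variable [DecidableEq ι]

@[simp]
theorem productMap_singleAlgHom (f : ∀ j, A j →ₐ[k] B) (j : ι) (x : A j) :
    productMap f (singleAlgHom j x) = f j x := by
  rw [singleAlgHom_apply, productMap_tprod, Finset.prod_eq_single j]
  · simp
  · intro i _ hij
    simp [MonoidHom.mulSingle_apply, Pi.mulSingle_eq_of_ne hij]
  · simp

theorem comp_productMap {C : Type*} [CommSemiring C] [Algebra k C] (g : B →ₐ[k] C)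
    (f : ∀ j, A j →ₐ[k] B) : g.comp (productMap f) = productMap fun j ↦ g.comp (f j) :=
  algHom_ext fun j ↦ AlgHom.ext fun x ↦ by simp

theorem productMap_comp_singleAlgHom (F : (⨂[k] j, A j) →ₐ[k] B) :
    productMap (fun j ↦ F.comp (singleAlgHom j)) = F :=
  algHom_ext fun j ↦ AlgHom.ext fun x ↦ by simp only [AlgHom.comp_apply, productMap_singleAlgHom]

end productMap

section units

variable {k ι : Type*} [CommRing k] [Fintype ι] {A : ι → Type*} [∀ j, CommRing (A j)]
  [∀ j, Algebra k (A j)]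

theorem productMap_update_apply_of_isUnit [DecidableEq ι] {j₀ : ι}
    (hA : HasConstantUnits k (A j₀)) (γ : ∀ j, A j →ₐ[k] k) (δ : A j₀ →ₐ[k] k)
    {u : ⨂[k] j, A j} (hu : IsUnit u) :
    productMap (Function.update γ j₀ δ) u = productMap γ u := by
  -- `Ψ` evaluates the factors `j ≠ j₀` by `γ` and keeps the factor `j₀`; both sides factor
  -- through the unit `Ψ u` of `A j₀`, which is a constant.
  let Ψ : (⨂[k] j, A j) →ₐ[k] A j₀ :=
    productMap (Function.update (fun j ↦ (Algebra.ofId k (A j₀)).comp (γ j)) j₀ (AlgHom.id k _))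
  have hΨ : ∀ θ : ∀ j, A j →ₐ[k] k, (∀ j ≠ j₀, θ j = γ j) → productMap θ = (θ j₀).comp Ψ := by
    intro θ hθ
    rw [comp_productMap]
    congr 1
    funext j
    rcases eq_or_ne j j₀ with rfl | hj
    · simp
    · rw [Function.update_of_ne hj, ← AlgHom.comp_assoc, hθ j hj,
        Subsingleton.elim ((θ j₀).comp (Algebra.ofId k (A j₀))) (AlgHom.id k k), AlgHom.id_comp]
  obtain ⟨c, hc⟩ := hA (hu.map Ψ).unit
  rw [hΨ _ fun j hj ↦ Function.update_of_ne hj _ _, hΨ γ fun _ _ ↦ rfl, AlgHom.comp_apply,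
    AlgHom.comp_apply, show Ψ u = algebraMap k (A j₀) c from hc, AlgHom.commutes,
    AlgHom.commutes]

theorem productMap_apply_eq_of_isUnit (hA : ∀ j, HasConstantUnits k (A j))
    (γ δ : ∀ j, A j →ₐ[k] k) {u : ⨂[k] j, A j} (hu : IsUnit u) :
    productMap γ u = productMap δ u := by
  classical
  suffices ∀ s : Finset ι, ∀ γ : ∀ j, A j →ₐ[k] k, (∀ j ∉ s, γ j = δ j) →
      productMap γ u = productMap δ u from this Finset.univ γ (by simp)
  intro s
  induction s using Finset.induction_on with
  | empty => exact fun γ hγ ↦ by rw [funext fun j ↦ hγ j (Finset.notMem_empty j)]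
  | insert a s _ ih =>
    intro γ hγ
    rw [← productMap_update_apply_of_isUnit (hA a) γ (δ a) hu]
    refine ih _ fun j hj ↦ ?_
    rcases eq_or_ne j a with rfl | hja
    · simp
    · rw [Function.update_of_ne hja]
      exact hγ j (by simp [hja, hj])

theorem algHom_apply_eq_of_isUnit (hA : ∀ j, HasConstantUnits k (A j))
    (ε ε' : (⨂[k] j, A j) →ₐ[k] k) {u : ⨂[k] j, A j} (hu : IsUnit u) : ε u = ε' u := by
  classical
  rw [← productMap_comp_singleAlgHom ε, ← productMap_comp_singleAlgHom ε']
  exact productMap_apply_eq_of_isUnit hA _ _ hu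

end units

section mapAlgHom

variable {k ι : Type*} [CommSemiring k] {A C D : ι → Type*}
  [∀ j, CommSemiring (A j)] [∀ j, Algebra k (A j)]
  [∀ j, CommSemiring (C j)] [∀ j, Algebra k (C j)]
  [∀ j, CommSemiring (D j)] [∀ j, Algebra k (D j)]

noncomputable def mapAlgHom (f : ∀ j, A j →ₐ[k] C j) : (⨂[k] j, A j) →ₐ[k] ⨂[k] j, C j :=
  liftAlgHom ((tprod k).compLinearMap fun j ↦ (f j).toLinearMap)
    (by simp [← Pi.one_def, one_def]) (fun x y ↦ by simp [tprod_mul_tprod, ← Pi.mul_def])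

@[simp]
theorem mapAlgHom_tprod (f : ∀ j, A j →ₐ[k] C j) (a : ∀ j, A j) :
    mapAlgHom f (tprod k a) = tprod k fun j ↦ f j (a j) :=
  map_tprod _ a

theorem mapAlgHom_comp (g : ∀ j, C j →ₐ[k] D j) (f : ∀ j, A j →ₐ[k] C j) :
    mapAlgHom (fun j ↦ (g j).comp (f j)) = (mapAlgHom g).comp (mapAlgHom f) :=
  AlgHom.toLinearMap_injective <| PiTensorProduct.ext <| MultilinearMap.ext fun a ↦ by simp

end mapAlgHom

theorem map_injective {K ι : Type*} [Field K] {M N : ι → Type*} [∀ j, AddCommGroup (M j)]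
    [∀ j, Module K (M j)] [∀ j, AddCommGroup (N j)] [∀ j, Module K (N j)]
    (f : ∀ j, M j →ₗ[K] N j) (hf : ∀ j, Function.Injective (f j)) :
    Function.Injective (map f) := by
  choose g hg using fun j ↦
    (f j).exists_leftInverse_of_injective (LinearMap.ker_eq_bot.mpr (hf j))
  refine Function.LeftInverse.injective (g := map g) fun x ↦ ?_
  rw [← LinearMap.comp_apply, ← map_comp, funext hg, map_id, LinearMap.id_apply]

theorem mapAlgHom_injective {K ι : Type*} [Field K] {A C : ι → Type*} [∀ j, CommRing (A j)]
    [∀ j, Algebra K (A j)] [∀ j, CommRing (C j)] [∀ j, Algebra K (C j)]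
    (f : ∀ j, A j →ₐ[K] C j) (hf : ∀ j, Function.Injective (f j)) :
    Function.Injective (mapAlgHom f) :=
  map_injective (fun j ↦ (f j).toLinearMap) hf

section FiniteType

variable {k ι : Type*} [CommRing k] {A : ι → Type*} [∀ j, CommRing (A j)] [∀ j, Algebra k (A j)]

theorem iSup_range_singleAlgHom [Fintype ι] [DecidableEq ι] :
    ⨆ j, (singleAlgHom j : A j →ₐ[k] ⨂[k] j, A j).range = ⊤ := by
  rw [eq_top_iff]
  rintro x -
  induction x using PiTensorProduct.induction_on with
  | smul_tprod r a =>
    refine Subalgebra.smul_mem _ ?_ r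
    rw [← Finset.univ_prod_mulSingle a, tprod_prod]
    exact Subalgebra.prod_mem _ fun j _ ↦ Algebra.mem_iSup_of_mem j ⟨a j, rfl⟩
  | add x y hx hy => exact add_mem hx hy

instance [Finite ι] [∀ j, Algebra.FiniteType k (A j)] :
    Algebra.FiniteType k (⨂[k] j, A j) := by
  classical
  have := Fintype.ofFinite ι
  refine ⟨?_⟩
  rw [← iSup_range_singleAlgHom, ← Finset.sup_univ_eq_iSup]
  refine Finset.sup_induction Subalgebra.fg_bot (fun _ h₁ _ h₂ ↦ h₁.sup h₂) fun j _ ↦ ?_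
  rw [← Algebra.map_top]
  exact Algebra.FiniteType.out.map _

end FiniteType

section FiniteSubalgebras

variable {k ι : Type*} [CommRing k] {A : ι → Type*} [∀ j, CommRing (A j)] [∀ j, Algebra k (A j)]

theorem range_mapAlgHom_val_mono {A' A'' : ∀ j, Subalgebra k (A j)} (h : ∀ j, A' j ≤ A'' j) :
    (mapAlgHom fun j ↦ (A' j).val).range ≤ (mapAlgHom fun j ↦ (A'' j).val).range := by
  rw [show (fun j ↦ (A' j).val) = fun j ↦ (A'' j).val.comp (Subalgebra.inclusion (h j)) from rfl,
    mapAlgHom_comp]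
  exact AlgHom.range_comp_le_range _ _

theorem exists_fg_mem_range_mapAlgHom_val (x : ⨂[k] j, A j) :
    ∃ A' : ∀ j, Subalgebra k (A j), (∀ j, (A' j).FG) ∧
      x ∈ (mapAlgHom fun j ↦ (A' j).val).range := by
  induction x using PiTensorProduct.induction_on with
  | smul_tprod r a =>
    refine ⟨fun j ↦ Algebra.adjoin k {a j}, fun j ↦ ⟨{a j}, by simp⟩,
      r • tprod k fun j ↦ ⟨a j, Algebra.subset_adjoin rfl⟩, by simp⟩
  | add x y hx hy =>
    obtain ⟨A₁, hA₁, hx⟩ := hx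
    obtain ⟨A₂, hA₂, hy⟩ := hy
    exact ⟨fun j ↦ A₁ j ⊔ A₂ j, fun j ↦ (hA₁ j).sup (hA₂ j),
      add_mem (range_mapAlgHom_val_mono (fun _ ↦ le_sup_left) hx)
        (range_mapAlgHom_val_mono (fun _ ↦ le_sup_right) hy)⟩

end FiniteSubalgebras

section Core

variable {k ι : Type*} [Field k] [IsAlgClosed k] [Fintype ι] {A : ι → Type*}
  [∀ j, CommRing (A j)] [∀ j, Algebra k (A j)]

theorem eq_of_isUnit_of_sub_algebraMap_mem (hA : ∀ j, HasConstantUnits k (A j))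
    {u : ⨂[k] j, A j} (hu : IsUnit u) (q₁ q₂ : Ideal (⨂[k] j, A j)) [q₁.IsPrime] [q₂.IsPrime]
    {d₁ d₂ : k} (h₁ : u - algebraMap k _ d₁ ∈ q₁) (h₂ : u - algebraMap k _ d₂ ∈ q₂) :
    d₁ = d₂ := by
  obtain ⟨v, huv⟩ := hu.exists_right_inv
  -- Characters are only guaranteed on finite type algebras, so pass to a tensor product of
  -- finitely generated subalgebras containing `u` and `u⁻¹`.
  obtain ⟨A', hfg, ⟨u₀, rfl⟩, ⟨v₀, rfl⟩⟩ : ∃ A' : ∀ j, Subalgebra k (A j), (∀ j, (A' j).FG) ∧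
      u ∈ (mapAlgHom fun j ↦ (A' j).val).range ∧ v ∈ (mapAlgHom fun j ↦ (A' j).val).range := by
    obtain ⟨A₁, hA₁, hu⟩ := exists_fg_mem_range_mapAlgHom_val u
    obtain ⟨A₂, hA₂, hv⟩ := exists_fg_mem_range_mapAlgHom_val v
    exact ⟨fun j ↦ A₁ j ⊔ A₂ j, fun j ↦ (hA₁ j).sup (hA₂ j),
      range_mapAlgHom_val_mono (fun _ ↦ le_sup_left) hu,
      range_mapAlgHom_val_mono (fun _ ↦ le_sup_right) hv⟩
  set Φ := mapAlgHom fun j ↦ (A' j).val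
  have hΦ : Function.Injective Φ := mapAlgHom_injective _ fun _ ↦ Subtype.val_injective
  have hu₀ : IsUnit u₀ := IsUnit.of_mul_eq_one v₀ (hΦ (by simpa using huv))
  have : ∀ j, Algebra.FiniteType k (A' j) := fun j ↦ (Subalgebra.fg_iff_finiteType _).mp (hfg j)
  obtain ⟨ε₁, rfl⟩ := exists_algHom_apply_eq_of_sub_mem (q₁.comap Φ) (x := u₀) (d := d₁)
    (by simpa [AlgHom.commutes] using h₁)
  obtain ⟨ε₂, rfl⟩ := exists_algHom_apply_eq_of_sub_mem (q₂.comap Φ) (x := u₀) (d := d₂)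
    (by simpa [AlgHom.commutes] using h₂)
  exact algHom_apply_eq_of_isUnit
    (fun j ↦ (hA j).of_injective (A' j).val Subtype.val_injective) ε₁ ε₂ hu₀

end Core

end PiTensorProduct

theorem hasConstantUnits_of_surjective_comap {k ι Q : Type*} [Field k] [IsAlgClosed k]
    [Fintype ι] {A : ι → Type*} [∀ j, CommRing (A j)] [∀ j, Algebra k (A j)] [CommRing Q]
    [IsReduced Q] [Algebra k Q] [Algebra.FiniteType k Q] (hA : ∀ j, HasConstantUnits k (A j))
    (φ : Q →ₐ[k] ⨂[k] j, A j)
    (hφ : Function.Surjective (PrimeSpectrum.comap (φ : Q →+* ⨂[k] j, A j))) :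
    HasConstantUnits k Q := by
  intro u
  cases subsingleton_or_nontrivial Q
  · exact ⟨0, Subsingleton.elim _ _⟩
  have hlift : ∀ χ : Q →ₐ[k] k, ∃ q : PrimeSpectrum (⨂[k] j, A j),
      φ u - algebraMap k _ (χ u) ∈ q.asIdeal := by
    intro χ
    obtain ⟨q, hq⟩ := hφ ⟨RingHom.ker χ, RingHom.ker_isPrime _⟩
    have : (u : Q) - algebraMap k Q (χ u) ∈ (PrimeSpectrum.comap (φ : Q →+* _) q).asIdeal := by
      simp [hq, RingHom.mem_ker]
    exact ⟨q, by simpa [AlgHom.commutes] using this⟩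
  have hconst : ∀ χ χ' : Q →ₐ[k] k, χ u = χ' u := fun χ χ' ↦ by
    obtain ⟨q, hq⟩ := hlift χ
    obtain ⟨q', hq'⟩ := hlift χ'
    exact PiTensorProduct.eq_of_isUnit_of_sub_algebraMap_mem hA (u.isUnit.map φ) _ _ hq hq'
  obtain ⟨M, _⟩ := Ideal.exists_maximal Q
  obtain ⟨χ₀, -⟩ := exists_algHom_ker_eq_of_isMaximal (k := k) M
  refine ⟨χ₀ u, sub_eq_zero.mp (eq_zero_of_forall_algHom_apply_eq_zero (k := k) fun χ ↦ ?_)⟩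
  rw [map_sub, AlgHom.commutes, hconst χ χ₀, Algebra.algebraMap_self_apply, sub_self]

open Polynomial in
theorem mem_span_isIdempotentElem_of_prod_sub_eq_zero {k R : Type*} [Field k] [CommRing R]
    [Algebra k R] (x : R) (s : Finset k) (hx : ∏ c ∈ s, (x - algebraMap k R c) = 0) :
    x ∈ Submodule.span k {e : R | IsIdempotentElem e} := by
  classical
  rcases s.eq_empty_or_nonempty with rfl | hs
  · have : Subsingleton R := subsingleton_of_zero_eq_one (by simpa using hx.symm)
    simp [Subsingleton.elim x 0]
  have hinj : Set.InjOn id (s : Set k) := Set.injOn_id _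
  set e : k → R := fun a ↦ aeval x (Lagrange.basis s id a)
  have hnodal : aeval x (Lagrange.nodal s id) = 0 := by
    simpa [Lagrange.nodal, map_prod] using hx
  -- the Lagrange polynomials at the roots `s` give idempotents `e a` on which `x` acts as `a`
  have hxe : ∀ a ∈ s, (x - algebraMap k R a) * e a = 0 := fun a ha ↦ by
    have : (X - C a) * Lagrange.basis s id a =
        C (Lagrange.nodalWeight s id a) * Lagrange.nodal s id := by
      rw [Lagrange.basis_eq_prod_sub_inv_mul_nodal_div ha, mul_left_comm]
      exact congrArg _ (EuclideanDomain.mul_div_cancel' (X_sub_C_ne_zero a)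
        (Lagrange.X_sub_C_dvd_nodal id ha))
    simpa [hnodal] using congrArg (aeval x) this
  have hpoly : ∀ a ∈ s, ∀ p : k[X], aeval x p * e a = algebraMap k R (p.eval a) * e a := by
    intro a ha p
    obtain ⟨q, hq⟩ := X_sub_C_dvd_sub_C_eval (p := p) (a := a)
    rw [← sub_eq_zero, ← sub_mul, ← aeval_C x, ← map_sub, hq, map_mul, mul_right_comm,
      map_sub, aeval_X, aeval_C, hxe a ha, zero_mul]
  have hidem : ∀ a ∈ s, IsIdempotentElem (e a) := fun a ha ↦ by
    have := hpoly a ha (Lagrange.basis s id a)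
    rwa [show (Lagrange.basis s id a).eval a = 1 from Lagrange.eval_basis_self hinj ha,
      map_one, one_mul] at this
  have hsum : ∑ a ∈ s, e a = 1 := by
    simp only [e, ← map_sum, Lagrange.sum_basis hinj hs, map_one]
  have hx_eq : x = ∑ a ∈ s, a • e a := calc
    x = x * ∑ a ∈ s, e a := by rw [hsum, mul_one]
    _ = ∑ a ∈ s, a • e a := Finset.mul_sum _ _ _ |>.trans <| Finset.sum_congr rfl fun a ha ↦ by
        rw [Algebra.smul_def, ← sub_eq_zero, ← sub_mul, hxe a ha]
  rw [hx_eq]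
  exact Submodule.sum_mem _ fun a ha ↦ Submodule.smul_mem _ _ (Submodule.subset_span (hidem a ha))

theorem units_locally_constant_of_stratification_general
    (R : Type) [CommRing R] [Algebra ℂ R] [Algebra.FiniteType ℂ R]
    (n : ℕ) (I : Fin n → Ideal R)
    -- the closed subschemes `Xᵢ = Spec (R/Iᵢ)` cover `X`
    (hcov : (⨅ i, I i) = ⊥)
    [∀ i, IsReduced (R ⧸ I i)]
    (m : Fin n → ℕ)
    (S : ∀ i : Fin n, Fin (m i) → Type)
    [∀ i j, CommRing (S i j)] [∀ i j, Algebra ℂ (S i j)] [∀ i j, IsReduced (S i j)]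
    -- each `Xᵢ` is the image of a surjective morphism from the product `Πⱼ Spec Sᵢⱼ`
    (φ : ∀ i : Fin n, (R ⧸ I i) →ₐ[ℂ] (PiTensorProduct ℂ (S i)))
    (hφ : ∀ i, Function.Surjective (PrimeSpectrum.comap ((φ i).toRingHom)))
    -- each factor `Spec Sᵢⱼ` receives a surjection from a scheme `Spec Tᵢⱼ` with only
    -- constant invertible functions
    (T : ∀ i : Fin n, Fin (m i) → Type)
    [∀ i j, CommRing (T i j)] [∀ i j, Algebra ℂ (T i j)]
    (ψ : ∀ i j, (S i j) →ₐ[ℂ] (T i j))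
    (hψ : ∀ i j, Function.Surjective (PrimeSpectrum.comap ((ψ i j : S i j →+* T i j))))
    (hT : ∀ i j, ∀ u : (T i j)ˣ, ∃ c : ℂˣ, (u : T i j) = algebraMap ℂ (T i j) (c : ℂ)) :
    ∀ u : Rˣ, (u : R) ∈ Submodule.span ℂ {e : R | IsIdempotentElem e} := by
  intro u
  have hS : ∀ i j, HasConstantUnits ℂ (S i j) := fun i j ↦
    HasConstantUnits.of_injective (ψ i j) (RingHom.injective_of_surjective_comap _ (hψ i j))
      fun v ↦ (hT i j v).elim fun c hc ↦ ⟨c, hc⟩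
  have hQ : ∀ i, HasConstantUnits ℂ (R ⧸ I i) := fun i ↦
    have : Algebra.FiniteType ℂ (R ⧸ I i) := .of_surjective _ (Ideal.Quotient.mkₐ_surjective ℂ _)
    hasConstantUnits_of_surjective_comap (hS i) (φ i) (hφ i)
  choose c hc using fun i ↦ hQ i (Units.map (Ideal.Quotient.mk (I i) : R →* R ⧸ I i) u)
  refine mem_span_isIdempotentElem_of_prod_sub_eq_zero _ (Finset.univ.image c) ?_
  rw [← Ideal.mem_bot, ← hcov, Ideal.mem_iInf]
  intro i
  refine Ideal.mem_of_dvd _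
    (Finset.dvd_prod_of_mem _ (Finset.mem_image_of_mem c (Finset.mem_univ i))) ?_
  rw [← Ideal.Quotient.eq, ← Ideal.Quotient.algebraMap_eq, ← IsScalarTower.algebraMap_apply]
  exact hc i

theorem units_locally_constant_of_stratification
    (R : Type) [CommRing R] [Algebra ℂ R] [IsReduced R] [Algebra.FiniteType ℂ R]
    (n : ℕ) (I : Fin n → Ideal R)
    -- the closed subschemes `Xᵢ = Spec (R/Iᵢ)` cover `X`
    (hcov : (⨅ i, I i) = ⊥)
    [∀ i, IsReduced (R ⧸ I i)]
    (m : Fin n → ℕ)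
    (S : ∀ i : Fin n, Fin (m i) → Type)
    [∀ i j, CommRing (S i j)] [∀ i j, Algebra ℂ (S i j)] [∀ i j, IsReduced (S i j)]
    -- each `Xᵢ` is the image of a surjective morphism from the product `Πⱼ Spec Sᵢⱼ`
    (φ : ∀ i : Fin n, (R ⧸ I i) →ₐ[ℂ] (PiTensorProduct ℂ (S i)))
    (hφ : ∀ i, Function.Surjective (PrimeSpectrum.comap ((φ i).toRingHom)))
    -- each factor `Spec Sᵢⱼ` receives a surjection from a scheme `Spec Tᵢⱼ` with only
    -- constant invertible functions
    (T : ∀ i : Fin n, Fin (m i) → Type)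
    [∀ i j, CommRing (T i j)] [∀ i j, Algebra ℂ (T i j)]
    (ψ : ∀ i j, (S i j) →ₐ[ℂ] (T i j))
    (hψ : ∀ i j, Function.Surjective (PrimeSpectrum.comap ((ψ i j : S i j →+* T i j))))
    (hT : ∀ i j, ∀ u : (T i j)ˣ, ∃ c : ℂˣ, (u : T i j) = algebraMap ℂ (T i j) (c : ℂ)) :
    ∀ u : Rˣ, (u : R) ∈ Submodule.span ℂ {e : R | IsIdempotentElem e} :=
  units_locally_constant_of_stratification_general R n I hcov m S φ hφ T ψ hψ hT
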